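/- arXiv:1304.6608 — 7 statements merged into one kernel-verified Lean document; each statement's English description precedes it below -/
import Mathlib

section
/- (Patterson) For every N ≥ 1, every subset A of ℤ_{2N} with cardinality exactly N is homometric to its complement Aᶜ = ℤ_{2N} \ A; that is, iv(A)(n) = iv(Aᶜ)(n) for all n ∈ ℤ_{2N}. -/
/-- The interval vector of a finite subset `A` of `ℤ_M`:
`iv A n = #{(a, b) ∈ A × A : b - a = n}`. -/
def iv {M : ℕ} (A : Finset (ZMod M)) (n : ZMod M) : ℕ :=
  ((A ×ˢ A).filter (fun p => p.2 - p.1 = n)).card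

lemma iv_eq_card {M : ℕ} [NeZero M] (A : Finset (ZMod M)) (n : ZMod M) :
    iv A n = (Finset.univ.filter fun x : ZMod M => x ∈ A ∧ x + n ∈ A).card := by
  unfold iv
  apply Finset.card_bij' (fun p _ => p.1) (fun x _ => (x, x + n))
  · intro p hp
    simp only [Finset.mem_filter, Finset.mem_product] at hp ⊢
    have h2 : p.2 = p.1 + n := by rw [← hp.2]; ring
    exact ⟨Finset.mem_univ _, hp.1.1, h2 ▸ hp.1.2⟩
  · intro x hx
    simp only [Finset.mem_filter, Finset.mem_product] at hx ⊢
    exact ⟨⟨hx.2.1, hx.2.2⟩, by ring⟩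
  · intro p hp
    simp only [Finset.mem_filter, Finset.mem_product] at hp
    have h2 : p.2 = p.1 + n := by rw [← hp.2]; ring
    exact Prod.ext rfl h2.symm
  · intro x hx
    rfl

/-- (Patterson) Every `N`-point subset of `ℤ_{2N}` is homometric to its complement. -/
theorem homometric_compl_of_card_eq_half (N : ℕ) [NeZero N]
    (A : Finset (ZMod (2 * N))) (hA : A.card = N) (n : ZMod (2 * N)) :
    iv A n = iv Aᶜ n := by
  have hM : NeZero (2 * N) := ⟨by have := NeZero.ne N; omega⟩
  rw [iv_eq_card, iv_eq_card]
  set S := Finset.univ.filter fun x : ZMod (2 * N) => x ∈ A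
  set T := Finset.univ.filter fun x : ZMod (2 * N) => x + n ∈ A
  have hand : (Finset.univ.filter fun x : ZMod (2 * N) => x ∈ A ∧ x + n ∈ A) = S ∩ T := by
    rw [Finset.filter_and]
  have hSc : S.card = N := by
    simp [S, Finset.filter_univ_mem, hA]
  have hTc : T.card = N := by
    have h : T.card = A.card := Finset.card_bij (fun x _ => x + n) ?_ ?_ ?_
    · rw [h, hA]
    · intro x hx; simpa [T] using (Finset.mem_filter.mp hx).2
    · intro a _ b _ hab; exact by simpa using hab
    · intro b hb; exact ⟨b - n, by simp [T, hb], by ring⟩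
  have hcompl : (Finset.univ.filter fun x : ZMod (2 * N) => x ∈ Aᶜ ∧ x + n ∈ Aᶜ) =
      Finset.univ.filter fun x : ZMod (2 * N) => ¬(x ∈ A ∨ x + n ∈ A) := by
    apply Finset.filter_congr
    intro x _
    simp [not_or]
  have hor : (Finset.univ.filter fun x : ZMod (2 * N) => x ∈ A ∨ x + n ∈ A) = S ∪ T := by
    rw [Finset.filter_or]
  have h1 := Finset.card_filter_add_card_filter_not
    (s := (Finset.univ : Finset (ZMod (2 * N))))
    (p := fun x : ZMod (2 * N) => x ∈ A ∨ x + n ∈ A)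
  have h2 := Finset.card_union_add_card_inter S T
  have hcard : (Finset.univ : Finset (ZMod (2 * N))).card = 2 * N := by
    simp [ZMod.card]
  rw [hcompl, hand]
  rw [hor] at h1
  omega
end

section
/- (Theorem 1) Let N ≥ 1 and let A, B be subsets of ℤ_N with iv(A) = iv(B). Lift A to ℤ_{2N} via canonical representatives, i.e., let Ã = {ā : a ∈ A} ∪ {ā + N : a ∈ A} ⊆ ℤ_{2N}, where ā denotes the representative of a in {0,…,N−1} viewed in ℤ_{2N}, and define B̃ analogously. Then Ã and B̃ are homometric in ℤ_{2N}: iv(Ã) = iv(B̃). -/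
/-- The lift of `A ⊆ ℤ_N` to `ℤ_{2N}`:
`Ã = {ā : a ∈ A} ∪ {ā + N : a ∈ A}`, where `ā` is the canonical
representative of `a` in `{0, …, N−1}` viewed in `ℤ_{2N}`. -/
def doubleLift (N : ℕ) (A : Finset (ZMod N)) : Finset (ZMod (2 * N)) :=
  A.image (fun a => ((a.val : ZMod (2 * N)))) ∪
    A.image (fun a => ((a.val : ZMod (2 * N)) + (N : ZMod (2 * N))))

theorem iv_doubleLift (N : ℕ) (hN : 1 ≤ N) (A : Finset (ZMod N)) (n : ZMod (2 * N)) :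
    iv (doubleLift N A) n = 2 * iv A ((ZMod.castHom (dvd_mul_left N 2) (ZMod N)) n) := by
  haveI : NeZero N := ⟨by omega⟩
  haveI : NeZero (2 * N) := ⟨by omega⟩
  set f : ZMod N → ZMod (2 * N) := fun a => (a.val : ZMod (2 * N)) with hf
  set g : ZMod N → ZMod (2 * N) := fun a => (a.val : ZMod (2 * N)) + (N : ZMod (2 * N)) with hg
  set m : ZMod N := (ZMod.castHom (dvd_mul_left N 2) (ZMod N)) n with hm
  have hvf : ∀ a : ZMod N, (f a).val = a.val := by
    intro a
    exact ZMod.val_cast_of_lt (by have := a.val_lt; omega)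
  have hvg : ∀ a : ZMod N, (g a).val = a.val + N := by
    intro a
    have h1 : g a = ((a.val + N : ℕ) : ZMod (2 * N)) := by push_cast [hg]; ring
    rw [h1, ZMod.val_cast_of_lt (by have := a.val_lt; omega)]
  have hfinj : Function.Injective f := by
    intro a b hab
    apply ZMod.val_injective
    have := congrArg ZMod.val hab
    rwa [hvf, hvf] at this
  have hginj : Function.Injective g := by
    intro a b hab
    apply ZMod.val_injective
    have := congrArg ZMod.val hab
    rw [hvg, hvg] at this
    omega
  have hga : ∀ a, g a = f a + (N : ZMod (2 * N)) := fun a => rfl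
  have hcastf : ∀ b : ZMod N, (ZMod.castHom (dvd_mul_left N 2) (ZMod N)) (f b) = b := by
    intro b
    simp [hf, map_natCast, ZMod.natCast_val, ZMod.cast_id]
  have hNN : (N : ZMod (2 * N)) + (N : ZMod (2 * N)) = 0 := by
    have h0 : ((2 * N : ℕ) : ZMod (2 * N)) = 0 := ZMod.natCast_self _
    push_cast at h0
    linear_combination h0
  have hneg : -(N : ZMod (2 * N)) = (N : ZMod (2 * N)) := by
    rw [neg_eq_iff_add_eq_zero]; exact hNN
  have hNne : (N : ZMod (2 * N)) ≠ 0 := by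
    intro h0
    have := congrArg ZMod.val h0
    rw [ZMod.val_cast_of_lt (by omega), ZMod.val_zero] at this
    omega
  have hcastN : (ZMod.castHom (dvd_mul_left N 2) (ZMod N)) (N : ZMod (2 * N)) = 0 := by
    simp
  have hker : ∀ x : ZMod (2 * N),
      (ZMod.castHom (dvd_mul_left N 2) (ZMod N)) x = 0 → x = 0 ∨ x = (N : ZMod (2 * N)) := by
    intro x hx
    have hx' : ((x.val : ZMod N)) = 0 := by
      rw [ZMod.castHom_apply] at hx
      rw [ZMod.natCast_val]
      exact hx
    rw [ZMod.natCast_eq_zero_iff] at hx'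
    have hlt := x.val_lt
    have hxv : x.val = 0 ∨ x.val = N := by
      obtain ⟨k, hk⟩ := hx'
      rcases Nat.lt_or_ge k 2 with hk2 | hk2
      · interval_cases k <;> omega
      · have h2' : N * 2 ≤ N * k := Nat.mul_le_mul_left N hk2
        omega
    have hxid : ((x.val : ZMod (2 * N))) = x := by
      simp [ZMod.natCast_val, ZMod.cast_id]
    rcases hxv with h0 | h0
    · left; rw [← hxid, h0]; simp
    · right; rw [← hxid, h0]
  -- counting
  have hDL : doubleLift N A = A.image f ∪ A.image g := rfl
  have hdisj : Disjoint (A.image f) (A.image g) := by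
    rw [Finset.disjoint_left]
    rintro x hx hx'
    obtain ⟨a, _, rfl⟩ := Finset.mem_image.1 hx
    obtain ⟨b, _, hb⟩ := Finset.mem_image.1 hx'
    have := congrArg ZMod.val hb
    rw [hvg, hvf] at this
    have := a.val_lt
    omega
  have hsum : ∀ F : ZMod (2 * N) → ℕ,
      ∑ x ∈ doubleLift N A, F x = ∑ a ∈ A, (F (f a) + F (g a)) := by
    intro F
    rw [hDL, Finset.sum_union hdisj,
      Finset.sum_image (fun a _ b _ h => hfinj h),
      Finset.sum_image (fun a _ b _ h => hginj h), ← Finset.sum_add_distrib]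
  rw [iv, iv, Finset.card_filter, Finset.card_filter, Finset.sum_product, Finset.sum_product,
    hsum]
  rw [Finset.mul_sum]
  apply Finset.sum_congr rfl
  intro a _
  rw [hsum, hsum, ← Finset.sum_add_distrib, Finset.mul_sum]
  apply Finset.sum_congr rfl
  intro b _
  -- pointwise
  set c : ZMod (2 * N) := f b - f a with hc
  have e1 : g b - f a = c + N := by rw [hga, hc]; ring
  have e2 : f b - g a = c + N := by
    have h4 : f b - g a = c - N := by rw [hga, hc]; ring
    rw [h4, sub_eq_add_neg, hneg]
  have e3 : g b - g a = c := by rw [hga, hga, hc]; ring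
  have hcc : (ZMod.castHom (dvd_mul_left N 2) (ZMod N)) c = b - a := by
    rw [hc, map_sub, hcastf, hcastf]
  have hiff : b - a = m ↔ (c = n ∨ c + N = n) := by
    constructor
    · intro hba
      have h0 : (ZMod.castHom (dvd_mul_left N 2) (ZMod N)) (n - c) = 0 := by
        rw [map_sub, hcc, hba, hm, sub_self]
      rcases hker _ h0 with h0 | h0
      · left; linear_combination -h0
      · right; linear_combination -h0
    · rintro (rfl | rfl)
      · rw [hm, hcc]
      · rw [hm, map_add, hcc, hcastN, add_zero]
  have hnot : ¬(c = n ∧ c + N = n) := by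
    rintro ⟨rfl, h2⟩
    exact hNne (by linear_combination h2)
  rw [e1, e2, e3]
  rcases Classical.em (c = n) with h1 | h1 <;> rcases Classical.em (c + N = n) with h2 | h2
  · exact absurd ⟨h1, h2⟩ hnot
  · have hba : b - a = m := hiff.2 (Or.inl h1)
    rw [if_pos h1, if_neg h2, if_pos hba]; norm_num
  · have hba : b - a = m := hiff.2 (Or.inr h2)
    rw [if_neg h1, if_pos h2, if_pos hba]; norm_num
  · have hba : ¬(b - a = m) := fun hh => by rcases hiff.1 hh with h | h <;> [exact h1 h; exact h2 h]
    rw [if_neg h1, if_neg h2, if_neg hba]; norm_num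

/-- (Theorem 1) If `A Z_N B`, then `(A ∪ T_N A) Z_{2N} (B ∪ T_N B)`. -/
theorem homometric_doubleLift (N : ℕ) (hN : 1 ≤ N) (A B : Finset (ZMod N))
    (h : iv A = iv B) :
    iv (doubleLift N A) = iv (doubleLift N B) := by
  funext n
  rw [iv_doubleLift N hN A n, iv_doubleLift N hN B n, h]
end

section
/- (Theorem 2) Let N ≥ 1, m ≥ 1, and let A, B be subsets of ℤ_N with iv(A) = iv(B). Lift A to ℤ_{Nm} via canonical representatives and take the union of the m transposes by multiples of N: let Ã = {ā + jN : a ∈ A, 0 ≤ j ≤ m−1} ⊆ ℤ_{Nm}, where ā denotes the representative of a in {0,…,N−1} viewed in ℤ_{Nm}, and define B̃ analogously. Then Ã and B̃ are homometric in ℤ_{Nm}: iv(Ã) = iv(B̃). -/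
def multiLift (N m : ℕ) (A : Finset (ZMod N)) : Finset (ZMod (N * m)) :=
  (A ×ˢ Finset.range m).image
    (fun p => ((p.1.val : ZMod (N * m)) + (p.2 : ZMod (N * m)) * (N : ZMod (N * m))))

open Finset

theorem iv_eq_card_filter_add_mem {M : ℕ} (A : Finset (ZMod M)) (n : ZMod M) :
    iv A n = #{a ∈ A | a + n ∈ A} := by
  refine card_nbij' Prod.fst (fun a => (a, a + n)) ?_ ?_ ?_ ?_ <;>
    simp +contextual [Set.MapsTo, Set.LeftInvOn, sub_eq_iff_eq_add']
  rintro a b - hb rfl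
  exact hb

theorem AddMonoidHom.card_preimage_mul_card_codomain {G H F : Type*} [AddGroup G] [Fintype G]
    [AddGroup H] [Fintype H] [DecidableEq H] [FunLike F G H] [AddMonoidHomClass F G H]
    (f : F) (hf : Function.Surjective f) (S : Finset H) :
    #{g | f g ∈ S} * Fintype.card H = #S * Fintype.card G := by
  have hfiber (h : H) : #{g | f g = h} = #{g | f g = 0} :=
    AddMonoidHom.card_fiber_eq_of_mem_range f (hf h) (hf 0)
  have hcount (T : Finset H) : #{g | f g ∈ T} = #T * #{g | f g = 0} := calc
    #{g | f g ∈ T} = ∑ h ∈ T, #{g | f g = h} := by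
      rw [card_eq_sum_card_fiberwise (t := T) (fun g hg => by simpa using hg)]
      refine sum_congr rfl fun h hh => ?_
      rw [filter_filter]
      exact congrArg card (filter_congr fun g _ => and_iff_right_of_imp fun e => e ▸ hh)
    _ = #T * #{g | f g = 0} := by simp [hfiber]
  have hcard : Fintype.card G = Fintype.card H * #{g | f g = 0} := by
    simpa using hcount univ
  rw [hcount, hcard]
  ring

section

variable {N m : ℕ} [NeZero N]

theorem cast_val_add_mul (a : ZMod N) (j : ℕ) :
    (ZMod.cast (a.val + j * N : ZMod (N * m)) : ZMod N) = a := by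
  change ZMod.castHom (dvd_mul_right N m) (ZMod N) _ = a
  rw [map_add, map_mul, map_natCast, map_natCast, map_natCast, ZMod.natCast_self, mul_zero,
    add_zero, ZMod.natCast_zmod_val]

variable [NeZero m]

theorem multiLift_eq_filter (A : Finset (ZMod N)) :
    multiLift N m A = univ.filter fun z => (ZMod.cast z : ZMod N) ∈ A := by
  ext z
  simp only [multiLift, mem_image, mem_product, mem_range, mem_filter, mem_univ, true_and]
  constructor
  · rintro ⟨⟨a, j⟩, ⟨ha, -⟩, rfl⟩
    rwa [cast_val_add_mul]
  · intro hz
    refine ⟨(ZMod.cast z, z.val / N), ⟨hz, Nat.div_lt_of_lt_mul (ZMod.val_lt z)⟩, ?_⟩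
    calc _ = ((z.val % N + z.val / N * N : ℕ) : ZMod (N * m)) := by
          rw [ZMod.cast_eq_val, ZMod.val_natCast]; push_cast; rfl
      _ = z := by rw [Nat.mod_add_div', ZMod.natCast_zmod_val]

theorem card_filter_cast_mem (S : Finset (ZMod N)) :
    #{z : ZMod (N * m) | (ZMod.cast z : ZMod N) ∈ S} = #S * m := by
  have h := AddMonoidHom.card_preimage_mul_card_codomain
    (ZMod.castHom (dvd_mul_right N m) (ZMod N)) (ZMod.castHom_surjective _) S
  simp only [ZMod.castHom_apply, ZMod.card] at h
  exact Nat.eq_of_mul_eq_mul_right (NeZero.pos N) (h.trans (by ring))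

theorem iv_multiLift (A : Finset (ZMod N)) (n : ZMod (N * m)) :
    iv (multiLift N m A) n = iv A (ZMod.cast n) * m := by
  rw [iv_eq_card_filter_add_mem, iv_eq_card_filter_add_mem, multiLift_eq_filter,
    ← card_filter_cast_mem, filter_filter]
  congr 1
  ext z
  simp [ZMod.cast_add (dvd_mul_right N m)]

end

/-- (Theorem 2) If `A Z_N B`, then
`(A ∪ T_N A ∪ ⋯ ∪ T_{N(m−1)} A) Z_{Nm} (B ∪ T_N B ∪ ⋯ ∪ T_{N(m−1)} B)`. -/
theorem homometric_multiLift (N m : ℕ) (hN : 1 ≤ N) (hm : 1 ≤ m)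
    (A B : Finset (ZMod N)) (h : iv A = iv B) :
    iv (multiLift N m A) = iv (multiLift N m B) := by
  have : NeZero N := ⟨by omega⟩
  have : NeZero m := ⟨by omega⟩
  funext n
  rw [iv_multiLift, iv_multiLift, h]
end

section
/- (Theorem 3) Let N ≥ 1, m ≥ 2 with gcd(N, m) = 1, and let A, B be subsets of ℤ_N with iv(A) = iv(B). In ℤ_{Nm}, let Ã = {m·ā + j : a ∈ A, 0 ≤ j ≤ m−1} ⊆ ℤ_{Nm}, where ā denotes the representative of a in {0,…,N−1}, and define B̃ analogously from B. Then Ã and B̃ are homometric in ℤ_{Nm}: iv(Ã) = iv(B̃). -/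
/-!
The map `(a, j) ↦ m·ā + j` is injective on `ℤ_N × {0, …, m−1}`: its values are below `Nm`, so `ā`
and `j` are recovered as quotient and remainder by `m`. Moreover `m·b̄ − m·ā = m·(b − a)‾` in
`ℤ_{Nm}`, because `b̄ − ā` and `(b − a)‾` differ by a multiple of `N`. Hence the number of pairs of
lifted points at difference `n` is `∑_{a, b ∈ A} c_n(b − a)`, where `c_n(d)` counts the offsets
`j, k < m` with `m·d̄ + k − j = n`; regrouping by `d = b − a` writes it as `∑_d iv(A)(d)·c_n(d)`,
which depends on `A` only through `iv(A)`.
-/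

open Finset

/-- The lift of `A ⊆ ℤ_N` to `ℤ_{Nm}` by multiplication and transposition:
`Ã = {m·ā + j : a ∈ A, 0 ≤ j ≤ m−1}`, where `ā` is the canonical
representative of `a` in `{0, …, N−1}`. -/
def mulLift (N m : ℕ) (A : Finset (ZMod N)) : Finset (ZMod (N * m)) :=
  (A ×ˢ Finset.range m).image
    (fun p => ((m : ZMod (N * m)) * (p.1.val : ZMod (N * m)) + (p.2 : ZMod (N * m))))

theorem iv_eq_sum {M : ℕ} (A : Finset (ZMod M)) (n : ZMod M) :
    iv A n = ∑ a ∈ A, ∑ b ∈ A, if b - a = n then 1 else 0 := by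
  rw [iv, card_filter, sum_product]

theorem iv_image {α : Type*} [DecidableEq α] {M : ℕ} {s : Finset α} {f : α → ZMod M}
    (hf : Set.InjOn f s) (n : ZMod M) :
    iv (s.image f) n = ∑ x ∈ s, ∑ y ∈ s, if f y - f x = n then 1 else 0 := by
  rw [iv_eq_sum, sum_image hf]
  exact sum_congr rfl fun x _ => sum_image hf

theorem sum_sub_eq_sum_iv_smul {M : ℕ} [NeZero M] {R : Type*} [AddCommMonoid R]
    (A : Finset (ZMod M)) (g : ZMod M → R) :
    ∑ a ∈ A, ∑ b ∈ A, g (b - a) = ∑ d, iv A d • g d := by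
  rw [← sum_product' (f := fun a b => g (b - a)), ← sum_fiberwise (A ×ˢ A) (fun p => p.2 - p.1)]
  refine sum_congr rfl fun d _ => ?_
  rw [sum_congr rfl fun p hp => congrArg g (mem_filter.1 hp).2, sum_const]
  rfl

theorem Nat.eq_of_mul_add_eq_mul_add {m x y j k : ℕ} (hj : j < m) (hk : k < m)
    (h : m * x + j = m * y + k) : x = y ∧ j = k := by
  have hm : 0 < m := by omega
  obtain ⟨hx, hj⟩ := (Nat.div_mod_unique hm).2 ⟨(add_comm _ _).trans h, hj⟩
  obtain ⟨hy, hk⟩ := (Nat.div_mod_unique hm).2 ⟨add_comm _ _, hk⟩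
  exact ⟨hx.symm.trans hy, hj.symm.trans hk⟩

theorem ZMod.injOn_mul_val_add {N m : ℕ} [NeZero N] :
    Set.InjOn (fun p : ZMod N × ℕ => (m : ZMod (N * m)) * p.1.val + p.2) {p | p.2 < m} := by
  have hlt : ∀ p : ZMod N × ℕ, p.2 < m → m * p.1.val + p.2 < N * m := fun p hp => by
    nlinarith [p.1.val_lt]
  have hcast : ∀ p : ZMod N × ℕ,
      (m : ZMod (N * m)) * p.1.val + p.2 = ((m * p.1.val + p.2 : ℕ) : ZMod (N * m)) := by
    intro p; push_cast; rfl
  intro p hp q hq h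
  have hval := congrArg ZMod.val ((hcast p).symm.trans (h.trans (hcast q)))
  rw [ZMod.val_natCast_of_lt (hlt p hp), ZMod.val_natCast_of_lt (hlt q hq)] at hval
  obtain ⟨h1, h2⟩ := Nat.eq_of_mul_add_eq_mul_add hp hq hval
  exact Prod.ext (ZMod.val_injective N h1) h2

theorem ZMod.natCast_mul_val_sub {N : ℕ} [NeZero N] (m : ℕ) (a b : ZMod N) :
    (m : ZMod (N * m)) * b.val - m * a.val = m * (b - a).val := by
  have h := Nat.mod_add_div (a.val + (b - a).val) N
  rw [← ZMod.val_add, add_sub_cancel] at h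
  have hcast := congrArg (fun k : ℕ => ((m * k : ℕ) : ZMod (N * m))) h
  have hNm : ((N * m : ℕ) : ZMod (N * m)) = 0 := ZMod.natCast_self _
  push_cast at hcast hNm
  linear_combination hcast - ((a.val + (b - a).val) / N : ℕ) * hNm

def liftCount (N m : ℕ) (n : ZMod (N * m)) (d : ZMod N) : ℕ :=
  #{j ∈ range m ×ˢ range m | (m : ZMod (N * m)) * d.val + j.2 - j.1 = n}

theorem iv_mulLift {N m : ℕ} [NeZero N] (A : Finset (ZMod N)) (n : ZMod (N * m)) :
    iv (mulLift N m A) n = ∑ a ∈ A, ∑ b ∈ A, liftCount N m n (b - a) := by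
  rw [mulLift,
    iv_image (ZMod.injOn_mul_val_add.mono fun p hp => (mem_range.1 (mem_product.1 hp).2))]
  simp only [sum_product]
  refine sum_congr rfl fun a _ => ?_
  rw [sum_comm]
  refine sum_congr rfl fun b _ => ?_
  rw [liftCount, card_filter, sum_product]
  refine sum_congr rfl fun j _ => sum_congr rfl fun k _ => if_congr ?_ rfl rfl
  rw [← ZMod.natCast_mul_val_sub]
  constructor <;> intro h <;> linear_combination h

theorem homometric_mulLift_general (N m : ℕ) (hN : 1 ≤ N)
    (A B : Finset (ZMod N)) (h : iv A = iv B) :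
    iv (mulLift N m A) = iv (mulLift N m B) := by
  have : NeZero N := ⟨by omega⟩
  funext n
  rw [iv_mulLift, iv_mulLift, sum_sub_eq_sum_iv_smul, sum_sub_eq_sum_iv_smul, h]

/-- (Theorem 3) If `A Z_N B` and `gcd(N, m) = 1`, `m ≥ 2`, then
`(M_m A ∪ T_1 M_m A ∪ ⋯ ∪ T_{m−1} M_m A) Z_{Nm} (M_m B ∪ ⋯ ∪ T_{m−1} M_m B)`. -/
theorem homometric_mulLift (N m : ℕ) (hN : 1 ≤ N) (hm : 2 ≤ m)
    (hco : Nat.gcd N m = 1) (A B : Finset (ZMod N)) (h : iv A = iv B) :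
    iv (mulLift N m A) = iv (mulLift N m B) :=
  homometric_mulLift_general N m hN A B h
end

section
/- For every integer n ≥ 5, the subsets A = {0, 1, n−2, n−1, n+1} and B = {0, 1, 2, n−1, n+2} of ℤ_{2n} (elements taken modulo 2n) are Z-related: they are homometric (iv(A) = iv(B)) but not dihedrally equivalent (for every t ∈ ℤ_{2n}, B ≠ {a + t : a ∈ A} and B ≠ {−a + t : a ∈ A}). -/
/-- The set `{0, 1, n−2, n−1, n+1}` viewed in `ℤ_{2n}`. -/
def setA (n : ℕ) : Finset (ZMod (2 * n)) :=
  {((0 : ℕ) : ZMod (2 * n)), ((1 : ℕ) : ZMod (2 * n)), ((n - 2 : ℕ) : ZMod (2 * n)),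
    ((n - 1 : ℕ) : ZMod (2 * n)), ((n + 1 : ℕ) : ZMod (2 * n))}

/-- The set `{0, 1, 2, n−1, n+2}` viewed in `ℤ_{2n}`. -/
def setB (n : ℕ) : Finset (ZMod (2 * n)) :=
  {((0 : ℕ) : ZMod (2 * n)), ((1 : ℕ) : ZMod (2 * n)), ((2 : ℕ) : ZMod (2 * n)),
    ((n - 1 : ℕ) : ZMod (2 * n)), ((n + 2 : ℕ) : ZMod (2 * n))}

lemma cast_ne (M : ℕ) [NeZero M] (x y : ℕ) (hx : x < M) (hy : y < M) (h : x ≠ y) :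
    ((x : ZMod M)) ≠ y := by
  intro hxy
  apply h
  have := congrArg ZMod.val hxy
  rwa [ZMod.val_cast_of_lt hx, ZMod.val_cast_of_lt hy] at this

lemma singleton_sprod {α β : Type*} (a : α) (t : Multiset β) :
    ({a} : Multiset α) ×ˢ t = t.map (Prod.mk a) := by
  rw [← Multiset.cons_zero, Multiset.cons_product, Multiset.zero_product, add_zero]

lemma iv_count {M : ℕ} (s : Finset (ZMod M)) (d : ZMod M) :
    iv s d = Multiset.count d (Multiset.map (fun p => p.2 - p.1) (s.val ×ˢ s.val)) := by
  rw [Multiset.count_map, iv]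
  simp only [Finset.card, Finset.filter_val, Finset.product_val, eq_comm]

/-- No element of `setA n` has both of its neighbors in `setA n`. -/
lemma keyA (n : ℕ) (hn : 5 ≤ n) (a : ZMod (2 * n)) (ha : a ∈ setA n)
    (h1 : a + 1 ∈ setA n) (h2 : a - 1 ∈ setA n) : False := by
  haveI : NeZero (2 * n) := ⟨by omega⟩
  simp only [setA, Finset.mem_insert, Finset.mem_singleton] at ha
  rcases ha with rfl | rfl | rfl | rfl | rfl
  · have e : ((0 : ℕ) : ZMod (2 * n)) - 1 = ((2 * n - 1 : ℕ) : ZMod (2 * n)) := by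
      rw [Nat.cast_sub (by omega), ZMod.natCast_self]; push_cast; ring
    rw [e] at h2
    simp only [setA, Finset.mem_insert, Finset.mem_singleton] at h2
    rcases h2 with h | h | h | h | h <;>
      exact cast_ne _ _ _ (by omega) (by omega) (by omega) h
  · have e : ((1 : ℕ) : ZMod (2 * n)) + 1 = ((2 : ℕ) : ZMod (2 * n)) := by
      push_cast; ring
    rw [e] at h1
    simp only [setA, Finset.mem_insert, Finset.mem_singleton] at h1
    rcases h1 with h | h | h | h | h <;>
      exact cast_ne _ _ _ (by omega) (by omega) (by omega) h
  · have e : ((n - 2 : ℕ) : ZMod (2 * n)) - 1 = ((n - 3 : ℕ) : ZMod (2 * n)) := by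
      rw [Nat.cast_sub (by omega), Nat.cast_sub (by omega)]; push_cast; ring
    rw [e] at h2
    simp only [setA, Finset.mem_insert, Finset.mem_singleton] at h2
    rcases h2 with h | h | h | h | h <;>
      exact cast_ne _ _ _ (by omega) (by omega) (by omega) h
  · have e : ((n - 1 : ℕ) : ZMod (2 * n)) + 1 = ((n : ℕ) : ZMod (2 * n)) := by
      rw [Nat.cast_sub (by omega)]; push_cast; ring
    rw [e] at h1
    simp only [setA, Finset.mem_insert, Finset.mem_singleton] at h1
    rcases h1 with h | h | h | h | h <;>
      exact cast_ne _ _ _ (by omega) (by omega) (by omega) h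
  · have e : ((n + 1 : ℕ) : ZMod (2 * n)) + 1 = ((n + 2 : ℕ) : ZMod (2 * n)) := by
      push_cast; ring
    rw [e] at h1
    simp only [setA, Finset.mem_insert, Finset.mem_singleton] at h1
    rcases h1 with h | h | h | h | h <;>
      exact cast_ne _ _ _ (by omega) (by omega) (by omega) h

set_option maxHeartbeats 1600000 in
/-- For `n ≥ 5`, the sets `{0, 1, n−2, n−1, n+1}` and `{0, 1, 2, n−1, n+2}` are
Z-related in `ℤ_{2n}`: homometric but not dihedrally equivalent. -/
theorem zrelated_family_one (n : ℕ) (hn : 5 ≤ n) :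
    iv (setA n) = iv (setB n) ∧
    ∀ t : ZMod (2 * n),
      setB n ≠ (setA n).image (fun a => a + t) ∧
      setB n ≠ (setA n).image (fun a => -a + t) := by
  haveI : NeZero (2 * n) := ⟨by omega⟩
  constructor
  · -- homometry
    set m : ZMod (2 * n) := (n : ZMod (2 * n)) with hmdef
    have hm : (-m : ZMod (2 * n)) = m := by
      have h2m : (m : ZMod (2 * n)) + m = 0 := by
        rw [hmdef, ← Nat.cast_add]
        rw [show n + n = 2 * n by ring, ZMod.natCast_self]
      linear_combination -h2m
    have hA : (setA n).val = {(0 : ZMod (2 * n)), 1, m - 2, m - 1, m + 1} := by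
      rw [setA]
      rw [Finset.insert_val_of_notMem, Finset.insert_val_of_notMem,
          Finset.insert_val_of_notMem, Finset.insert_val_of_notMem]
      · push_cast [Nat.cast_sub (by omega : 2 ≤ n), Nat.cast_sub (by omega : 1 ≤ n)]
        rfl
      all_goals try simp only [Finset.mem_insert, Finset.mem_singleton, not_or]
      all_goals and_intros
      all_goals apply cast_ne <;> omega
    have hB : (setB n).val = {(0 : ZMod (2 * n)), 1, 2, m - 1, m + 2} := by
      rw [setB]
      rw [Finset.insert_val_of_notMem, Finset.insert_val_of_notMem,
          Finset.insert_val_of_notMem, Finset.insert_val_of_notMem]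
      · push_cast [Nat.cast_sub (by omega : 1 ≤ n)]
        rfl
      all_goals try simp only [Finset.mem_insert, Finset.mem_singleton, not_or]
      all_goals and_intros
      all_goals apply cast_ne <;> omega
    have hdiffA : Multiset.map (fun p => p.2 - p.1) ((setA n).val ×ˢ (setA n).val) =
        ({0, 0, 0, 0, 0, 1, 1, -1, -1, 2, -2, 3, -3, m - 3, m - 2, m - 2, m - 1, m - 1,
          m, m, m + 1, m + 1, m + 2, m + 2, m + 3} : Multiset (ZMod (2 * n))) := by
      rw [hA]
      simp only [Multiset.insert_eq_cons, Multiset.cons_product, singleton_sprod,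
        Multiset.map_cons, Multiset.map_singleton, Multiset.map_map, Multiset.map_add,
        Function.comp]
      simp only [← Multiset.singleton_add]
      ring_nf
      simp only [sub_eq_add_neg, hm]
      ring_nf
      abel
    have hdiffB : Multiset.map (fun p => p.2 - p.1) ((setB n).val ×ˢ (setB n).val) =
        ({0, 0, 0, 0, 0, 1, 1, -1, -1, 2, -2, 3, -3, m - 3, m - 2, m - 2, m - 1, m - 1,
          m, m, m + 1, m + 1, m + 2, m + 2, m + 3} : Multiset (ZMod (2 * n))) := by
      rw [hB]
      simp only [Multiset.insert_eq_cons, Multiset.cons_product, singleton_sprod,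
        Multiset.map_cons, Multiset.map_singleton, Multiset.map_map, Multiset.map_add,
        Function.comp]
      simp only [← Multiset.singleton_add]
      ring_nf
      simp only [sub_eq_add_neg, hm]
      ring_nf
      abel
    funext d
    rw [iv_count, iv_count, hdiffA, hdiffB]
  · -- non-equivalence
    intro t
    have hB1 : ((1 : ℕ) : ZMod (2 * n)) ∈ setB n := by
      simp [setB]
    have hB0 : ((0 : ℕ) : ZMod (2 * n)) ∈ setB n := by
      simp [setB]
    have hB2 : ((2 : ℕ) : ZMod (2 * n)) ∈ setB n := by
      simp [setB]
    constructor
    · intro h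
      rw [h] at hB1 hB0 hB2
      obtain ⟨a, haA, ha⟩ := Finset.mem_image.mp hB1
      obtain ⟨b, hbA, hb⟩ := Finset.mem_image.mp hB0
      obtain ⟨c, hcA, hc⟩ := Finset.mem_image.mp hB2
      have hb' : b = a - 1 := by
        have e : ((0 : ℕ) : ZMod (2 * n)) = ((1 : ℕ) : ZMod (2 * n)) - 1 := by
          push_cast; ring
        rw [e, ← ha] at hb
        linear_combination hb
      have hc' : c = a + 1 := by
        have e : ((2 : ℕ) : ZMod (2 * n)) = ((1 : ℕ) : ZMod (2 * n)) + 1 := by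
          push_cast; ring
        rw [e, ← ha] at hc
        linear_combination hc
      rw [hc'] at hcA
      rw [hb'] at hbA
      exact keyA n hn a haA hcA hbA
    · intro h
      rw [h] at hB1 hB0 hB2
      obtain ⟨a, haA, ha⟩ := Finset.mem_image.mp hB1
      obtain ⟨b, hbA, hb⟩ := Finset.mem_image.mp hB0
      obtain ⟨c, hcA, hc⟩ := Finset.mem_image.mp hB2
      have hb' : b = a + 1 := by
        have e : ((0 : ℕ) : ZMod (2 * n)) = ((1 : ℕ) : ZMod (2 * n)) - 1 := by
          push_cast; ring
        rw [e, ← ha] at hb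
        linear_combination -hb
      have hc' : c = a - 1 := by
        have e : ((2 : ℕ) : ZMod (2 * n)) = ((1 : ℕ) : ZMod (2 * n)) + 1 := by
          push_cast; ring
        rw [e, ← ha] at hc
        linear_combination -hc
      rw [hc'] at hcA
      rw [hb'] at hbA
      exact keyA n hn a haA hbA hcA
end

section
/- (Rosenblatt, type (i)) For every integer n ≥ 2 and every integer a with 1 ≤ a ≤ n−1, the four-element subsets A = {0, a, a+n, 2n} and B = {0, a, n, 2n+a} of ℤ_{4n} (elements taken modulo 4n) are homometric: iv(A) = iv(B). -/
/-!
The interval vector of `A` is the multiplicity function of the multiset of differences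
`y - x` over `(x, y) ∈ A × A`. For four distinct points this multiset is four copies of `0`
together with the six pairs `±(y - x)`. With `x = a` and `m = n`, the six differences of `A` are
`x, x + m, 2m, m, 2m - x, m - x` and those of `B` are `x, m, 2m + x, m - x, 2m, x + m`; they agree
up to sign since `2m - x = -(2m + x)` when `4m = 0`.
-/

section AddCommGroup

variable {G : Type*} [AddCommGroup G]

def diffMultiset (A : Finset G) : Multiset G := ∑ x ∈ A, ∑ y ∈ A, {y - x}

def pmPair (d : G) : Multiset G := {d, -d}

theorem pmPair_eq_add (d : G) : pmPair d = {d} + {-d} := rfl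

theorem pmPair_neg (d : G) : pmPair (-d) = pmPair d := by
  rw [pmPair_eq_add, pmPair_eq_add, neg_neg, add_comm]

theorem diffMultiset_of_nodup [DecidableEq G] {p q r s : G} (h : [p, q, r, s].Nodup) :
    diffMultiset {p, q, r, s} = 4 • {0} + (pmPair (q - p) + pmPair (r - p) + pmPair (s - p) +
      pmPair (r - q) + pmPair (s - q) + pmPair (s - r)) := by
  simp only [List.nodup_cons, List.mem_cons, List.not_mem_nil, or_false, List.nodup_nil,
    not_or] at h
  obtain ⟨⟨hpq, hpr, hps⟩, ⟨hqr, hqs⟩, hrs, -⟩ := h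
  simp only [diffMultiset, pmPair_eq_add, Finset.sum_insert, Finset.mem_insert,
    Finset.mem_singleton, Finset.sum_singleton, hpq, hpr, hps, hqr, hqs, hrs, or_self,
    not_false_eq_true, sub_self, neg_sub]
  abel

theorem diffMultiset_rosenblatt [DecidableEq G] {x m : G} (hm : 4 • m = 0)
    (hA : [0, x, x + m, 2 • m].Nodup) (hB : [0, x, m, 2 • m + x].Nodup) :
    diffMultiset {0, x, x + m, 2 • m} = diffMultiset {0, x, m, 2 • m + x} := by
  have h : pmPair (2 • m - x) = pmPair (2 • m + x) := by
    rw [← pmPair_neg (2 • m + x)]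
    congr 1
    linear_combination (norm := module) hm
  rw [diffMultiset_of_nodup hA, diffMultiset_of_nodup hB]
  have e1 : 2 • m - (x + m) = m - x := by abel
  have e2 : 2 • m + x - m = x + m := by abel
  simp only [sub_zero, add_sub_cancel_left, add_sub_cancel_right, h, e1, e2]
  abel

end AddCommGroup

section ZMod

variable {M : ℕ}

theorem iv_eq_count_diffMultiset (A : Finset (ZMod M)) (t : ZMod M) :
    iv A t = (diffMultiset A).count t := by
  simp only [iv, diffMultiset, Finset.card_filter, Finset.sum_product, Multiset.count_sum',
    Multiset.count_singleton, eq_comm]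

theorem iv_eq_of_diffMultiset_eq {A B : Finset (ZMod M)} (h : diffMultiset A = diffMultiset B) :
    iv A = iv B := by
  funext t
  rw [iv_eq_count_diffMultiset, iv_eq_count_diffMultiset, h]

theorem nodup_map_natCast {l : List ℕ} (hl : l.Nodup) (hlt : ∀ k ∈ l, k < M) :
    (l.map (Nat.cast : ℕ → ZMod M)).Nodup :=
  hl.map_on fun i hi j hj hij => by
    rw [ZMod.natCast_eq_natCast_iff', Nat.mod_eq_of_lt (hlt i hi), Nat.mod_eq_of_lt (hlt j hj)] at hij
    exact hij

end ZMod

theorem rosenblatt_type_one_general (n a : ℕ) (ha1 : 1 ≤ a) (ha2 : a ≤ n - 1) :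
    iv ({((0 : ℕ) : ZMod (4 * n)), ((a : ℕ) : ZMod (4 * n)),
          ((a + n : ℕ) : ZMod (4 * n)), ((2 * n : ℕ) : ZMod (4 * n))} : Finset (ZMod (4 * n))) =
      iv ({((0 : ℕ) : ZMod (4 * n)), ((a : ℕ) : ZMod (4 * n)),
          ((n : ℕ) : ZMod (4 * n)), ((2 * n + a : ℕ) : ZMod (4 * n))} : Finset (ZMod (4 * n))) := by
  have hA := nodup_map_natCast (M := 4 * n) (l := [0, a, a + n, 2 * n]) (by grind) (by grind)
  have hB := nodup_map_natCast (M := 4 * n) (l := [0, a, n, 2 * n + a]) (by grind) (by grind)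
  have hm : 4 • (n : ZMod (4 * n)) = 0 := by
    rw [nsmul_eq_mul]; exact_mod_cast ZMod.natCast_self (4 * n)
  have h2 : ((2 * n : ℕ) : ZMod (4 * n)) = 2 • (n : ZMod (4 * n)) := by
    rw [nsmul_eq_mul, Nat.cast_mul, Nat.cast_ofNat]
  simp only [List.map_cons, List.map_nil, Nat.cast_add, h2, Nat.cast_zero] at hA hB ⊢
  exact iv_eq_of_diffMultiset_eq (diffMultiset_rosenblatt hm hA hB)

/-- (Rosenblatt, type (i)) For `n ≥ 2` and `1 ≤ a ≤ n−1`, the sets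
`{0, a, a+n, 2n}` and `{0, a, n, 2n+a}` are homometric in `ℤ_{4n}`. -/
theorem rosenblatt_type_one (n a : ℕ) (hn : 2 ≤ n) (ha1 : 1 ≤ a) (ha2 : a ≤ n - 1) :
    iv ({((0 : ℕ) : ZMod (4 * n)), ((a : ℕ) : ZMod (4 * n)),
          ((a + n : ℕ) : ZMod (4 * n)), ((2 * n : ℕ) : ZMod (4 * n))} : Finset (ZMod (4 * n))) =
      iv ({((0 : ℕ) : ZMod (4 * n)), ((a : ℕ) : ZMod (4 * n)),
          ((n : ℕ) : ZMod (4 * n)), ((2 * n + a : ℕ) : ZMod (4 * n))} : Finset (ZMod (4 * n))) :=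
  rosenblatt_type_one_general n a ha1 ha2
end

section
/- (Rosenblatt, type (ii)) For every integer n ≥ 1, the four-element subsets A = {0, n, 4n, 6n} and B = {0, 2n, 3n, 7n} of ℤ_{13n} (elements taken modulo 13n) are homometric: iv(A) = iv(B). -/
/-- (Rosenblatt, type (ii)) For `n ≥ 1`, the sets `{0, n, 4n, 6n}` and
`{0, 2n, 3n, 7n}` are homometric in `ℤ_{13n}`. -/
theorem rosenblatt_type_two (n : ℕ) (hn : 1 ≤ n) :
    iv ({((0 : ℕ) : ZMod (13 * n)), ((n : ℕ) : ZMod (13 * n)),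
          ((4 * n : ℕ) : ZMod (13 * n)), ((6 * n : ℕ) : ZMod (13 * n))} : Finset (ZMod (13 * n))) =
      iv ({((0 : ℕ) : ZMod (13 * n)), ((2 * n : ℕ) : ZMod (13 * n)),
          ((3 * n : ℕ) : ZMod (13 * n)), ((7 * n : ℕ) : ZMod (13 * n))} : Finset (ZMod (13 * n))) := by
  haveI : NeZero (13 * n) := ⟨by omega⟩
  set ee : ℕ → ZMod (13 * n) := fun k => ((k * n : ℕ) : ZMod (13 * n)) with hee
  have hlt : ∀ i, i < 13 → i * n < 13 * n := by
    intro i hi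
    exact Nat.mul_lt_mul_of_lt_of_le hi le_rfl (by omega)
  have hne : ∀ i j, i < 13 → j < 13 → i ≠ j → ee i ≠ ee j := by
    intro i j hi hj hij h
    apply hij
    have := congrArg ZMod.val h
    rw [hee] at this
    simp only [ZMod.val_cast_of_lt (hlt i hi), ZMod.val_cast_of_lt (hlt j hj)] at this
    exact Nat.eq_of_mul_eq_mul_right (by omega) this
  have hdiff : ∀ i j k : ℕ, (k + i) % 13 = j % 13 → ee j - ee i = ee k := by
    intro i j k h
    have h2 : (k + i) * n ≡ j * n [MOD 13 * n] := Nat.ModEq.mul_right' n h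
    rw [Nat.add_mul] at h2
    have h3 : ((k * n + i * n : ℕ) : ZMod (13 * n)) = ((j * n : ℕ) : ZMod (13 * n)) :=
      (ZMod.natCast_eq_natCast_iff _ _ _).mpr h2
    show ((j*n:ℕ):ZMod (13*n)) - ((i*n:ℕ):ZMod (13*n)) = ((k*n:ℕ):ZMod (13*n))
    rw [sub_eq_iff_eq_add, ← h3]
    push_cast
    ring
  have key : ∀ (A : Finset (ZMod (13*n))) (m : ZMod (13*n)),
      iv A m = Multiset.count m ((A ×ˢ A).val.map (fun p => p.2 - p.1)) := by
    intro A m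
    simp [iv, Finset.card, Finset.filter_val, Multiset.count_map, eq_comm]
  have hA : ({((0 : ℕ) : ZMod (13 * n)), ((n : ℕ) : ZMod (13 * n)),
          ((4 * n : ℕ) : ZMod (13 * n)), ((6 * n : ℕ) : ZMod (13 * n))} : Finset (ZMod (13 * n)))
      = {ee 0, ee 1, ee 4, ee 6} := by rw [hee]; norm_num
  have hB : ({((0 : ℕ) : ZMod (13 * n)), ((2 * n : ℕ) : ZMod (13 * n)),
          ((3 * n : ℕ) : ZMod (13 * n)), ((7 * n : ℕ) : ZMod (13 * n))} : Finset (ZMod (13 * n)))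
      = {ee 0, ee 2, ee 3, ee 7} := by rw [hee]; norm_num
  -- not-mem facts for A
  have nmA2 : ee 4 ∉ ({ee 6} : Finset (ZMod (13*n))) := by
    simp only [Finset.mem_singleton]; exact hne 4 6 (by norm_num) (by norm_num) (by norm_num)
  have nmA1 : ee 1 ∉ ({ee 4, ee 6} : Finset (ZMod (13*n))) := by
    simp only [Finset.mem_insert, Finset.mem_singleton, not_or]
    exact ⟨hne 1 4 (by norm_num) (by norm_num) (by norm_num),
           hne 1 6 (by norm_num) (by norm_num) (by norm_num)⟩
  have nmA0 : ee 0 ∉ ({ee 1, ee 4, ee 6} : Finset (ZMod (13*n))) := by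
    simp only [Finset.mem_insert, Finset.mem_singleton, not_or]
    exact ⟨hne 0 1 (by norm_num) (by norm_num) (by norm_num),
           hne 0 4 (by norm_num) (by norm_num) (by norm_num),
           hne 0 6 (by norm_num) (by norm_num) (by norm_num)⟩
  have hvalA : ({ee 0, ee 1, ee 4, ee 6} : Finset (ZMod (13*n))).val
      = ee 0 ::ₘ ee 1 ::ₘ ee 4 ::ₘ ee 6 ::ₘ 0 := by
    rw [show ({ee 0, ee 1, ee 4, ee 6} : Finset (ZMod (13*n)))
        = insert (ee 0) (insert (ee 1) (insert (ee 4) {ee 6})) from rfl]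
    rw [Finset.insert_val_of_notMem nmA0, Finset.insert_val_of_notMem nmA1,
        Finset.insert_val_of_notMem nmA2]
    rfl
  -- not-mem facts for B
  have nmB2 : ee 3 ∉ ({ee 7} : Finset (ZMod (13*n))) := by
    simp only [Finset.mem_singleton]; exact hne 3 7 (by norm_num) (by norm_num) (by norm_num)
  have nmB1 : ee 2 ∉ ({ee 3, ee 7} : Finset (ZMod (13*n))) := by
    simp only [Finset.mem_insert, Finset.mem_singleton, not_or]
    exact ⟨hne 2 3 (by norm_num) (by norm_num) (by norm_num),
           hne 2 7 (by norm_num) (by norm_num) (by norm_num)⟩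
  have nmB0 : ee 0 ∉ ({ee 2, ee 3, ee 7} : Finset (ZMod (13*n))) := by
    simp only [Finset.mem_insert, Finset.mem_singleton, not_or]
    exact ⟨hne 0 2 (by norm_num) (by norm_num) (by norm_num),
           hne 0 3 (by norm_num) (by norm_num) (by norm_num),
           hne 0 7 (by norm_num) (by norm_num) (by norm_num)⟩
  have hvalB : ({ee 0, ee 2, ee 3, ee 7} : Finset (ZMod (13*n))).val
      = ee 0 ::ₘ ee 2 ::ₘ ee 3 ::ₘ ee 7 ::ₘ 0 := by
    rw [show ({ee 0, ee 2, ee 3, ee 7} : Finset (ZMod (13*n)))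
        = insert (ee 0) (insert (ee 2) (insert (ee 3) {ee 7})) from rfl]
    rw [Finset.insert_val_of_notMem nmB0, Finset.insert_val_of_notMem nmB1,
        Finset.insert_val_of_notMem nmB2]
    rfl
  have dA : (({ee 0, ee 1, ee 4, ee 6} : Finset (ZMod (13*n))) ×ˢ {ee 0, ee 1, ee 4, ee 6}).val.map
      (fun p => p.2 - p.1)
      = Multiset.map ee ↑([0,1,4,6, 12,0,3,5, 9,10,0,2, 7,8,11,0] : List ℕ) := by
    rw [Finset.product_val, hvalA]
    simp only [Multiset.cons_product, Multiset.zero_product, Multiset.map_add, Multiset.map_map,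
      Multiset.map_cons, Multiset.map_zero, add_zero, Function.comp, Multiset.cons_add,
      zero_add, Multiset.map_coe, List.map,
      hdiff 0 0 0 (by norm_num), hdiff 0 1 1 (by norm_num), hdiff 0 4 4 (by norm_num),
      hdiff 0 6 6 (by norm_num), hdiff 1 0 12 (by norm_num), hdiff 1 1 0 (by norm_num),
      hdiff 1 4 3 (by norm_num), hdiff 1 6 5 (by norm_num), hdiff 4 0 9 (by norm_num),
      hdiff 4 1 10 (by norm_num), hdiff 4 4 0 (by norm_num), hdiff 4 6 2 (by norm_num),
      hdiff 6 0 7 (by norm_num), hdiff 6 1 8 (by norm_num), hdiff 6 4 11 (by norm_num),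
      hdiff 6 6 0 (by norm_num)]
    rfl
  have dB : (({ee 0, ee 2, ee 3, ee 7} : Finset (ZMod (13*n))) ×ˢ {ee 0, ee 2, ee 3, ee 7}).val.map
      (fun p => p.2 - p.1)
      = Multiset.map ee ↑([0,2,3,7, 11,0,1,5, 10,12,0,4, 6,8,9,0] : List ℕ) := by
    rw [Finset.product_val, hvalB]
    simp only [Multiset.cons_product, Multiset.zero_product, Multiset.map_add, Multiset.map_map,
      Multiset.map_cons, Multiset.map_zero, add_zero, Function.comp, Multiset.cons_add,
      zero_add, Multiset.map_coe, List.map,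
      hdiff 0 0 0 (by norm_num), hdiff 0 2 2 (by norm_num), hdiff 0 3 3 (by norm_num),
      hdiff 0 7 7 (by norm_num), hdiff 2 0 11 (by norm_num), hdiff 2 2 0 (by norm_num),
      hdiff 2 3 1 (by norm_num), hdiff 2 7 5 (by norm_num), hdiff 3 0 10 (by norm_num),
      hdiff 3 2 12 (by norm_num), hdiff 3 3 0 (by norm_num), hdiff 3 7 4 (by norm_num),
      hdiff 7 0 6 (by norm_num), hdiff 7 2 8 (by norm_num), hdiff 7 3 9 (by norm_num),
      hdiff 7 7 0 (by norm_num)]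
    rfl
  funext m
  rw [hA, hB, key, key, dA, dB]
  have hl : (↑([0,1,4,6, 12,0,3,5, 9,10,0,2, 7,8,11,0] : List ℕ) : Multiset ℕ)
      = ↑([0,2,3,7, 11,0,1,5, 10,12,0,4, 6,8,9,0] : List ℕ) := by decide
  rw [hl]
end
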